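/- Define on the graded dual H_{≤0}^✻ the operators δ̃_i (i ≥ 1) by δ̃_i(1*) = 0 and δ̃_i([s_1,...,s_k]*) = Σ_{j=1}^i (1−s_j)[s_1,...,s_j−1,...,s_k]* for k ≥ i (and 0 for i > k). Then the family {δ̃_i} is a shifted coderivation with respect to the dual coproduct ⧢_{≤0}*: (id ⊗̂ δ̃_i + δ̃_i ⊗ id) ∘ ⧢_{≤0}* = ⧢_{≤0}* ∘ δ̃_i for all i ≥ 1. -/

import Mathlib

open Finsupp TensorProduct

noncomputable section

/-- The underlying space of the extended shuffle algebra: formal ℚ-linear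
combinations of words (lists of integers); the empty word is the unit `1`. -/
abbrev W : Type := List ℤ →₀ ℚ

/-- The basis word `[s₁,…,s_k]` (the empty list is the unit `1`). -/
def wd (l : List ℤ) : W := Finsupp.single l 1

/-- A word has all entries nonpositive. -/
def NP (l : List ℤ) : Prop := ∀ a ∈ l, a ≤ 0

/-- A word has all entries positive. -/
def Pos (l : List ℤ) : Prop := ∀ a ∈ l, 1 ≤ a

/-- The operator `J : 1 ↦ 0, [s₁,s₂,…] ↦ [s₁-1,s₂,…]`. -/
def Jop : W →ₗ[ℚ] W :=
  Finsupp.lsum ℚ fun l => match l with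
    | [] => (0 : ℚ →ₗ[ℚ] W)
    | a :: s => Finsupp.lsingle ((a - 1) :: s)

/-- Prepending `a` to every word: `[a, w]`. -/
def pre (a : ℤ) : W →ₗ[ℚ] W := Finsupp.lmapDomain ℚ ℚ (List.cons a)

/-- Characterization of the extended shuffle product on `H_ℤ`. -/
structure IsExtShuffle (sh : W →ₗ[ℚ] W →ₗ[ℚ] W) : Prop where
  assoc : ∀ x y z : W, sh (sh x y) z = sh x (sh y z)
  one_mul : ∀ x : W, sh (wd []) x = x
  mul_one : ∀ x : W, sh x (wd []) = x
  zero_mul_word : ∀ s : List ℤ, sh (wd [0]) (wd s) = wd (0 :: s)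
  word_mul_zero : ∀ (a : ℤ) (s : List ℤ), 0 < a → sh (wd (a :: s)) (wd [0]) = wd (0 :: a :: s)
  leibniz : ∀ x y : W, Jop (sh x y) = sh (Jop x) y + sh x (Jop y)
  graded : ∀ s t l : List ℤ, l.length ≠ s.length + t.length → sh (wd s) (wd t) l = 0

/-- The operator `J_{≥1}`. -/
def J1 : W →ₗ[ℚ] W :=
  Finsupp.lsum ℚ fun l => match l with
    | [] => (0 : ℚ →ₗ[ℚ] W)
    | a :: s => if a = 1 then 0 else Finsupp.lsingle ((a - 1) :: s)

/-- The operator `δ_i`. -/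
def del (i : ℕ) : W →ₗ[ℚ] W :=
  Finsupp.lsum ℚ fun l =>
    if i ≤ l.length then
      ∑ j ∈ Finset.range i, ((l.getD j 0 : ℤ) : ℚ) • Finsupp.lsingle (l.set j (l.getD j 0 + 1))
    else 0

def delZ (i : ℤ) : W →ₗ[ℚ] W := if 0 < i then del i.toNat else 0

/-- The shifted tensor `A ⊗̂ δ_i`. -/
def shiftT (A : W →ₗ[ℚ] W) (i : ℕ) : W ⊗[ℚ] W →ₗ[ℚ] W ⊗[ℚ] W :=
  TensorProduct.lift <| Finsupp.lsum ℚ fun s =>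
    LinearMap.toSpanSingleton ℚ (W →ₗ[ℚ] W ⊗[ℚ] W)
      ((TensorProduct.mk ℚ W W (A (wd s))) ∘ₗ delZ ((i : ℤ) - s.length))

/-- The counit. -/
def eps : W →ₗ[ℚ] ℚ :=
  Finsupp.lsum ℚ fun l => if l = [] then LinearMap.id else 0

/-- The grading degree `n - (s₁+⋯+s_n)` on words with nonpositive entries. -/
def gdeg (l : List ℤ) : ℤ := l.length - l.sum

/-- The componentwise product on `W ⊗ W`. -/
def shT (sh : W →ₗ[ℚ] W →ₗ[ℚ] W) : W ⊗[ℚ] W →ₗ[ℚ] W ⊗[ℚ] W →ₗ[ℚ] W ⊗[ℚ] W :=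
  TensorProduct.lift (LinearMap.compl₂ ((TensorProduct.mapBilinear (RingHom.id ℚ) W W W W).comp sh) sh)

/-- Characterization of the coproduct `Δ_{≤0}`. -/
structure IsDle0 (sh : W →ₗ[ℚ] W →ₗ[ℚ] W) (D : W →ₗ[ℚ] W ⊗[ℚ] W) : Prop where
  one : D (wd []) = wd [] ⊗ₜ[ℚ] wd []
  zero : D (wd [0]) = wd [] ⊗ₜ[ℚ] wd [0] + wd [0] ⊗ₜ[ℚ] wd []
  coder : ∀ l : List ℤ, NP l → D (Jop (wd l)) =
      ((TensorProduct.map LinearMap.id Jop + TensorProduct.map Jop LinearMap.id :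
        W ⊗[ℚ] W →ₗ[ℚ] W ⊗[ℚ] W)) (D (wd l))
  zeroCons : ∀ l : List ℤ, NP l → D (wd (0 :: l)) = shT sh (D (wd [0])) (D (wd l))

/-- The pairing realizing the Riemann duality map `φ`:
`phiPair x y = (φ x)(y)`, with `φ([s₁,…,s_k]) = [1-s₁,…,1-s_k]*`. -/
def phiPair : W →ₗ[ℚ] W →ₗ[ℚ] ℚ :=
  Finsupp.lsum ℚ fun l =>
    LinearMap.toSpanSingleton ℚ (W →ₗ[ℚ] ℚ) (Finsupp.lapply (l.map fun a => 1 - a))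

/-- `pairT f g` evaluates a tensor against a pair of linear functionals. -/
def pairT (f g : W →ₗ[ℚ] ℚ) : W ⊗[ℚ] W →ₗ[ℚ] ℚ :=
  TensorProduct.lift ((LinearMap.mul ℚ ℚ).compl₁₂ f g)

/-- The transpose of the dual operator `δ̃_m` (with `δ̃_m = 0` for `m ≤ 0`). -/
def tT (m : ℤ) : W →ₗ[ℚ] W :=
  Finsupp.lsum ℚ fun l =>
    if 0 < m ∧ m ≤ (l.length : ℤ) then
      ∑ j ∈ Finset.range m.toNat,
        ((-(l.getD j 0) : ℤ) : ℚ) • Finsupp.lsingle (l.set j (l.getD j 0 + 1))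
    else 0


-- basic lemmas
lemma pre_wd (a : ℤ) (l : List ℤ) : pre a (wd l) = wd (a :: l) := by
  simp [pre, wd, Finsupp.lmapDomain, Finsupp.mapDomain_single]

lemma Jop_wd_cons (a : ℤ) (l : List ℤ) : Jop (wd (a :: l)) = wd ((a - 1) :: l) := by
  simp [Jop, wd, Finsupp.lsum_single]

lemma Jop_wd_nil : Jop (wd []) = 0 := by
  simp [Jop, wd, Finsupp.lsum_single]

lemma delZ_wd (m : ℤ) (l : List ℤ) :
    delZ m (wd l) =
      if 0 < m ∧ m ≤ (l.length : ℤ) then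
        ∑ j ∈ Finset.range m.toNat,
          ((l.getD j 0 : ℤ) : ℚ) • wd (l.set j (l.getD j 0 + 1))
      else 0 := by
  by_cases hm : 0 < m
  · have : m.toNat ≤ l.length ↔ m ≤ (l.length : ℤ) := Int.toNat_le
    simp only [delZ, del, if_pos hm, wd, Finsupp.lsum_single]
    by_cases h2 : m ≤ (l.length : ℤ)
    · rw [if_pos (this.mpr h2), if_pos ⟨hm, h2⟩]
      simp [Finsupp.lsingle_apply]
    · rw [if_neg (fun hh => h2 (this.mp hh)), if_neg (fun hh => h2 hh.2)]
      simp
  · simp [delZ, if_neg hm, hm]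

lemma delZ_wd_nil (m : ℤ) : delZ m (wd []) = 0 := by
  rw [delZ_wd]
  have : ¬ (0 < m ∧ m ≤ ((List.nil : List ℤ).length : ℤ)) := by simp
  rw [if_neg this]

lemma tT_apply (m : ℤ) (x : W) : tT m x = -(delZ m x) := by
  have : tT m = -(delZ m) := by
    apply Finsupp.lhom_ext
    intro l c
    have : Finsupp.single l c = c • wd l := by simp [wd, Finsupp.smul_single]
    rw [this, map_smul, map_smul]
    simp only [LinearMap.neg_apply, delZ_wd]
    rw [tT, wd, Finsupp.lsum_single]
    split_ifs with h
    · congr 1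
      rw [LinearMap.sum_apply, ← Finset.sum_neg_distrib]
      refine Finset.sum_congr rfl fun j _ => ?_
      rw [LinearMap.smul_apply, Finsupp.lsingle_apply, ← neg_smul, wd]
      push_cast
      ring_nf
    · simp
  rw [this]; rfl
lemma set_getD_self : ∀ (l : List ℤ) (j : ℕ), j < l.length → l.set j (l.getD j 0) = l
  | [], j, h => by simp at h
  | a :: l, 0, _ => rfl
  | a :: l, j + 1, h => by
      simp only [List.getD_cons_succ, List.set_cons_succ, List.cons.injEq, true_and]
      exact set_getD_self l j (by simpa using h)

lemma getD_set_self : ∀ (l : List ℤ) (j : ℕ) (x : ℤ), j < l.length → (l.set j x).getD j 0 = x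
  | [], j, x, h => by simp at h
  | a :: l, 0, x, _ => rfl
  | a :: l, j + 1, x, h => by
      simp only [List.set_cons_succ, List.getD_cons_succ]
      exact getD_set_self l j x (by simpa using h)

lemma delZ_cons (m : ℤ) (a : ℤ) (l : List ℤ) :
    delZ m (wd (a :: l)) =
      (if 1 ≤ m ∧ m ≤ (l.length : ℤ) + 1 then (a : ℚ) • wd ((a + 1) :: l) else 0)
        + pre a (delZ (m - 1) (wd l)) := by
  rw [delZ_wd, delZ_wd]
  rcases lt_trichotomy m 1 with hm | hm | hm
  · have h1 : ¬ (0 < m ∧ m ≤ ((a :: l).length : ℤ)) := by intro h; omega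
    have h2 : ¬ (1 ≤ m ∧ m ≤ (l.length : ℤ) + 1) := by intro h; omega
    have h3 : ¬ (0 < m - 1 ∧ m - 1 ≤ (l.length : ℤ)) := by intro h; omega
    rw [if_neg h1, if_neg h2, if_neg h3]
    simp
  · subst hm
    have h1 : (0 < (1:ℤ) ∧ (1:ℤ) ≤ ((a :: l).length : ℤ)) := by
      simp only [List.length_cons, Nat.cast_add, Nat.cast_one]
      omega
    have h2 : (1 ≤ (1:ℤ) ∧ (1:ℤ) ≤ (l.length : ℤ) + 1) := by constructor <;> omega
    have h3 : ¬ (0 < (1:ℤ) - 1 ∧ (1:ℤ) - 1 ≤ (l.length : ℤ)) := by intro h; omega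
    rw [if_pos h1, if_pos h2, if_neg h3]
    simp
  · -- m ≥ 2
    have hlen : ((a :: l).length : ℤ) = (l.length : ℤ) + 1 := by
      simp only [List.length_cons]; push_cast; ring
    have hiff : (0 < m ∧ m ≤ ((a :: l).length : ℤ)) ↔ (0 < m - 1 ∧ m - 1 ≤ (l.length : ℤ)) := by
      rw [hlen]; omega
    have hiff2 : (0 < m ∧ m ≤ ((a :: l).length : ℤ)) ↔ (1 ≤ m ∧ m ≤ (l.length : ℤ) + 1) := by
      rw [hlen]; omega
    by_cases hc : 0 < m ∧ m ≤ ((a :: l).length : ℤ)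
    · rw [if_pos hc, if_pos (hiff2.mp hc), if_pos (hiff.mp hc)]
      have htn : m.toNat = (m - 1).toNat + 1 := by omega
      rw [htn, Finset.sum_range_succ']
      simp only [List.getD_cons_succ, List.set_cons_succ, List.getD_cons_zero,
        List.set_cons_zero]
      rw [map_sum, add_comm]
      congr 1
      refine Finset.sum_congr rfl fun j _ => ?_
      rw [map_smul, pre_wd]
    · rw [if_neg hc, if_neg (fun h => hc (hiff2.mpr h)), if_neg (fun h => hc (hiff.mpr h))]
      simp

lemma delZ_pre0 (m : ℤ) (x : W) : delZ m (pre 0 x) = pre 0 (delZ (m - 1) x) := by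
  have : delZ m ∘ₗ pre 0 = pre 0 ∘ₗ delZ (m - 1) := by
    apply Finsupp.lhom_ext
    intro l c
    have hs : Finsupp.single l c = c • wd l := by simp [wd, Finsupp.smul_single]
    rw [hs]
    simp only [LinearMap.comp_apply, map_smul]
    rw [pre_wd, delZ_cons]
    simp
  exact LinearMap.congr_fun this x
/-- Truncation to words of length ≥ m (for m ≥ 1). -/
def Rop (m : ℤ) : W →ₗ[ℚ] W :=
  Finsupp.lsum ℚ fun l => if 1 ≤ m ∧ m ≤ (l.length : ℤ) then Finsupp.lsingle l else 0

lemma Rop_wd (m : ℤ) (l : List ℤ) :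
    Rop m (wd l) = if 1 ≤ m ∧ m ≤ (l.length : ℤ) then wd l else 0 := by
  rw [Rop, wd, Finsupp.lsum_single]
  split_ifs with h
  · simp [wd, Finsupp.lsingle_apply]
  · simp

lemma J_pre (a : ℤ) (x : W) : Jop (pre a x) = pre (a - 1) x := by
  have : Jop ∘ₗ pre a = pre (a - 1) := by
    apply Finsupp.lhom_ext
    intro l c
    have hs : Finsupp.single l c = c • wd l := by simp [wd, Finsupp.smul_single]
    rw [hs]
    simp only [LinearMap.comp_apply, map_smul]
    rw [pre_wd, Jop_wd_cons, pre_wd]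
  exact LinearMap.congr_fun this x

lemma delZ_J (m : ℤ) (x : W) : delZ m (Jop x) = Jop (delZ m x) - Rop m x := by
  have : delZ m ∘ₗ Jop = Jop ∘ₗ delZ m - Rop m := by
    apply Finsupp.lhom_ext
    intro l c
    have hs : Finsupp.single l c = c • wd l := by simp [wd, Finsupp.smul_single]
    rw [hs]
    simp only [LinearMap.comp_apply, LinearMap.sub_apply, map_smul]
    rw [Rop_wd]
    match l with
    | [] =>
        rw [Jop_wd_nil, delZ_wd_nil]
        have : ¬ (1 ≤ m ∧ m ≤ (([] : List ℤ).length : ℤ)) := by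
          simp only [List.length_nil, Nat.cast_zero]; omega
        rw [if_neg this]
        simp
    | a :: l =>
        rw [Jop_wd_cons, delZ_cons, delZ_cons]
        have hl : ((a :: l).length : ℤ) = (l.length : ℤ) + 1 := by
          simp only [List.length_cons, Nat.cast_add, Nat.cast_one]
        rw [hl]
        have hstep : a - 1 + 1 = a := by ring
        have hstep2 : a + 1 - 1 = a := by ring
        rw [hstep, map_add, J_pre, apply_ite Jop, map_smul, Jop_wd_cons, map_zero, hstep2]
        split_ifs with h
        · push_cast
          module
        · push_cast
          module
  exact LinearMap.congr_fun this x
lemma single_eq_smul_wd (l : List ℤ) (c : ℚ) : Finsupp.single l c = c • wd l := by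
  simp [wd, Finsupp.smul_single]

lemma Rop_coeff (m : ℤ) (X : W) (l : List ℤ) :
    (Rop m X) l = if 1 ≤ m ∧ m ≤ (l.length : ℤ) then X l else 0 := by
  induction X using Finsupp.induction_linear with
  | zero => simp
  | add f g hf hg =>
      rw [map_add, Finsupp.add_apply, hf, hg, Finsupp.add_apply]
      split_ifs <;> simp
  | single t c =>
      rw [single_eq_smul_wd, map_smul, Finsupp.smul_apply, Rop_wd]
      by_cases htl : t = l
      · subst htl
        split_ifs <;> simp
      · split_ifs <;> simp [wd, Finsupp.single_apply, htl]

lemma Rop_prod {sh : W →ₗ[ℚ] W →ₗ[ℚ] W} (hsh : IsExtShuffle sh) (m : ℤ) (u t : List ℤ) :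
    Rop m (sh (wd u) (wd t)) =
      sh (wd u) (Rop (m - u.length) (wd t)) + sh (Rop m (wd u)) (wd t) := by
  ext l
  rw [Finsupp.add_apply, Rop_coeff, Rop_wd, Rop_wd,
    apply_ite (sh (wd u)), map_zero,
    apply_ite (fun z : W => sh z (wd t)), map_zero]
  simp only [LinearMap.zero_apply, Finsupp.zero_apply, apply_ite (fun f : W => f l)]
  by_cases hl : l.length = u.length + t.length
  · split_ifs with h1 h2 h3 <;> first
      | (exfalso; omega)
      | simp
  · have h0 : sh (wd u) (wd t) l = 0 := hsh.graded u t l hl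
    rw [h0]
    split_ifs <;> simp

lemma Rop_prod' {sh : W →ₗ[ℚ] W →ₗ[ℚ] W} (hsh : IsExtShuffle sh) (m : ℤ) (u : List ℤ) (y : W) :
    Rop m (sh (wd u) y) =
      sh (wd u) (Rop (m - u.length) y) + sh (Rop m (wd u)) y := by
  induction y using Finsupp.induction_linear with
  | zero => simp
  | add f g hf hg =>
      simp only [map_add, hf, hg]
      abel
  | single t c =>
      rw [single_eq_smul_wd, map_smul, map_smul, map_smul, map_smul, map_smul,
        Rop_prod hsh, smul_add]
lemma delZ_apply (m : ℤ) (s : List ℤ) (X : W) :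
    (delZ m X) s =
      if 0 < m ∧ m ≤ (s.length : ℤ) then
        ∑ j ∈ Finset.range m.toNat,
          ((s.getD j 0 - 1 : ℤ) : ℚ) * X (s.set j (s.getD j 0 - 1))
      else 0 := by
  induction X using Finsupp.induction_linear with
  | zero => split_ifs <;> simp
  | add f g hf hg =>
      rw [map_add, Finsupp.add_apply, hf, hg]
      split_ifs with h
      · rw [← Finset.sum_add_distrib]
        refine Finset.sum_congr rfl fun j _ => ?_
        rw [Finsupp.add_apply]
        ring
      · simp
  | single t c =>
      rw [single_eq_smul_wd, map_smul, Finsupp.smul_apply, delZ_wd]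
      by_cases hlen : t.length = s.length
      · have hcond : (0 < m ∧ m ≤ (t.length : ℤ)) ↔ (0 < m ∧ m ≤ (s.length : ℤ)) := by
          rw [hlen]
        by_cases h : 0 < m ∧ m ≤ (s.length : ℤ)
        · rw [if_pos (hcond.mpr h), if_pos h]
          rw [Finsupp.finset_sum_apply, Finset.smul_sum]
          refine Finset.sum_congr rfl fun j hj => ?_
          have hjs : j < s.length := by
            have h2 := h.2
            have := Finset.mem_range.mp hj
            omega
          have hjt : j < t.length := by omega
          by_cases hts : t = s.set j (s.getD j 0 - 1)
          · have htj : t.getD j 0 = s.getD j 0 - 1 := by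
              rw [hts]; exact getD_set_self s j _ hjs
            have hset : t.set j (t.getD j 0 + 1) = s := by
              rw [htj, sub_add_cancel, hts, List.set_set, set_getD_self s j hjs]
            rw [hset, ← hts]
            simp only [Finsupp.smul_apply, wd, Finsupp.single_apply, if_pos rfl,
              smul_eq_mul, htj]
            push_cast
            ring
          · have hne : t.set j (t.getD j 0 + 1) ≠ s := by
              intro he
              apply hts
              have hsj : s.getD j 0 = t.getD j 0 + 1 := by
                rw [← he]; exact getD_set_self t j _ hjt
              have : s.set j (s.getD j 0 - 1) = t := by
                rw [hsj, add_sub_cancel_right, ← he, List.set_set,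
                  set_getD_self t j hjt]
              exact this.symm
            have hne2 : t ≠ s.set j (s.getD j 0 - 1) := hts
            simp only [Finsupp.smul_apply, wd, Finsupp.single_apply,
              if_neg hne, if_neg hne2]
            simp
        · rw [if_neg (fun hh => h (hcond.mp hh)), if_neg h]
          simp
      · have h1 : ∀ (j : ℕ) (x : ℤ), t.set j x ≠ s := by
          intro j x he
          exact hlen (by rw [← he, List.length_set])
        have h2 : ∀ (j : ℕ) (x : ℤ), t ≠ s.set j x := by
          intro j x he
          exact hlen (by rw [he, List.length_set])
        split_ifs <;>
          simp [Finsupp.finset_sum_apply, Finsupp.smul_apply, wd, Finsupp.single_apply,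
            h1, h2]
lemma NP_sum_nonpos : ∀ {l : List ℤ}, NP l → l.sum ≤ 0
  | [], _ => le_refl 0
  | a :: l, h => by
      have h1 : a ≤ 0 := h a List.mem_cons_self
      have h2 : l.sum ≤ 0 := NP_sum_nonpos fun b hb => h b (List.mem_cons_of_mem a hb)
      rw [List.sum_cons]
      omega

lemma length_le_gdeg {l : List ℤ} (h : NP l) : (l.length : ℤ) ≤ gdeg l := by
  have := NP_sum_nonpos h
  rw [gdeg]
  omega

lemma gdeg_cons (a : ℤ) (l : List ℤ) : gdeg (a :: l) = 1 - a + gdeg l := by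
  simp only [gdeg, List.length_cons, List.sum_cons, Nat.cast_add, Nat.cast_one]
  ring

lemma sh_zero_pre {sh : W →ₗ[ℚ] W →ₗ[ℚ] W} (hsh : IsExtShuffle sh) (x : W) :
    sh (wd [0]) x = pre 0 x := by
  have : sh (wd [0]) = pre 0 := by
    apply Finsupp.lhom_ext
    intro l c
    rw [single_eq_smul_wd, map_smul, map_smul, hsh.zero_mul_word, pre_wd]
  rw [this]

lemma key {sh : W →ₗ[ℚ] W →ₗ[ℚ] W} (hsh : IsExtShuffle sh) :
    ∀ (n : ℕ) (u : List ℤ), NP u → gdeg u ≤ (n : ℤ) → ∀ (m : ℤ) (y : W),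
      delZ m (sh (wd u) y)
        = sh (wd u) (delZ (m - u.length) y) + sh (delZ m (wd u)) y := by
  intro n
  induction n with
  | zero =>
      intro u hu hg m y
      have hlen : u.length = 0 := by
        have := length_le_gdeg hu
        omega
      have hnil : u = [] := List.length_eq_zero_iff.mp hlen
      subst hnil
      rw [hsh.one_mul, delZ_wd_nil, map_zero]
      simp only [List.length_nil, Nat.cast_zero, sub_zero, LinearMap.zero_apply]
      rw [hsh.one_mul]
      simp
  | succ n ih =>
      intro u hu hg m y
      match u with
      | [] =>
          rw [hsh.one_mul, delZ_wd_nil, map_zero]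
          simp only [List.length_nil, Nat.cast_zero, sub_zero, LinearMap.zero_apply]
          rw [hsh.one_mul]
          simp
      | a :: u' =>
          have hu' : NP u' := fun b hb => hu b (List.mem_cons_of_mem a hb)
          have ha : a ≤ 0 := hu a List.mem_cons_self
          rcases eq_or_lt_of_le ha with ha0 | haneg
          · -- a = 0
            subst ha0
            have hg' : gdeg u' ≤ (n : ℤ) := by
              have := gdeg_cons 0 u'
              push_cast at hg
              omega
            have hw : wd ((0 : ℤ) :: u') = sh (wd [0]) (wd u') := (hsh.zero_mul_word u').symm
            have hL : m - (((0:ℤ) :: u').length : ℤ) = m - 1 - (u'.length : ℤ) := by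
              simp only [List.length_cons, Nat.cast_add, Nat.cast_one]
              ring
            rw [hL, hw, hsh.assoc, sh_zero_pre hsh, delZ_pre0,
              ih u' hu' hg' (m - 1) y, map_add, ← sh_zero_pre hsh, ← sh_zero_pre hsh,
              ← hsh.assoc, ← hsh.assoc, ← hw]
            congr 2
            rw [sh_zero_pre hsh, ← delZ_pre0, pre_wd]
          · -- a < 0
            have hgu : gdeg ((a + 1) :: u') ≤ (n : ℤ) := by
              have e1 := gdeg_cons a u'
              have e2 := gdeg_cons (a + 1) u'
              push_cast at hg
              omega
            have hnp : NP ((a + 1) :: u') := by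
              intro b hb
              rcases List.mem_cons.mp hb with hb | hb
              · omega
              · exact hu' b hb
            have hJ : Jop (wd ((a + 1) :: u')) = wd (a :: u') := by
              rw [Jop_wd_cons]
              norm_num
            have hlen : ((a :: u').length : ℤ) = (((a + 1) :: u').length : ℤ) := by
              simp
            have hsplit : ∀ z : W, sh (Jop (wd ((a + 1) :: u'))) z
                = Jop (sh (wd ((a + 1) :: u')) z) - sh (wd ((a + 1) :: u')) (Jop z) :=
              fun z => eq_sub_of_add_eq (hsh.leibniz (wd ((a + 1) :: u')) z).symm
            have hJy : ∀ (p : ℤ) (z : W), Jop (delZ p z) = delZ p (Jop z) + Rop p z := by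
              intro p z
              rw [delZ_J]
              abel
            rw [← hJ, hlen]
            simp only [hsplit]
            simp only [map_sub]
            simp only [delZ_J]
            rw [ih _ hnp hgu m y, ih _ hnp hgu m (Jop y), Rop_prod' hsh]
            simp only [map_add, map_sub, LinearMap.add_apply, LinearMap.sub_apply]
            simp only [hsh.leibniz]
            simp only [hJy]
            simp only [map_add, LinearMap.add_apply]
            abel
/-- The family `δ̃_i` on the graded dual `H_{≤0}^✻` is a shifted coderivation
with respect to the dual coproduct `⧢_{≤0}*`:
`(id ⊗̂ δ̃_i + δ̃_i ⊗ id) ∘ ⧢_{≤0}* = ⧢_{≤0}* ∘ δ̃_i`, expressed coefficientwise by evaluating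
both sides at `[u]* ⊗ [v]*` (the operator `tT m` is the transpose of `δ̃_m`). -/
theorem dual_del_shifted_coderivation
    (sh : W →ₗ[ℚ] W →ₗ[ℚ] W) (hsh : IsExtShuffle sh)
    (i : ℕ) (hi : 1 ≤ i) (s u v : List ℤ) (hs : NP s) (hu : NP u) (hv : NP v) :
    (if i ≤ s.length then
        ∑ j ∈ Finset.range i,
          ((1 - s.getD j 0 : ℤ) : ℚ) * (sh (wd u) (wd v)) (s.set j (s.getD j 0 - 1))
      else 0)
      = (sh (wd u) (tT ((i : ℤ) - u.length) (wd v))) s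
        + (sh (tT (i : ℤ) (wd u)) (wd v)) s := by
  have H := key hsh (gdeg u).toNat u hu (Int.self_le_toNat _) (i : ℤ) (wd v)
  rw [tT_apply, tT_apply, map_neg, map_neg, LinearMap.neg_apply,
    Finsupp.neg_apply, Finsupp.neg_apply]
  have : ((sh (wd u)) ((delZ ((i : ℤ) - ↑u.length)) (wd v))) s
      + ((sh ((delZ (i : ℤ)) (wd u))) (wd v)) s
      = ((delZ (i : ℤ)) ((sh (wd u)) (wd v))) s := by
    rw [H, Finsupp.add_apply]
  rw [← neg_add, this, delZ_apply]
  have hcond : (0 < (i : ℤ) ∧ (i : ℤ) ≤ (s.length : ℤ)) ↔ i ≤ s.length := by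
    constructor
    · intro h; exact_mod_cast h.2
    · intro h; constructor <;> [exact_mod_cast hi; exact_mod_cast h]
  by_cases h : i ≤ s.length
  · rw [if_pos h, if_pos (hcond.mpr h), Int.toNat_natCast, ← Finset.sum_neg_distrib]
    refine Finset.sum_congr rfl fun j _ => ?_
    push_cast
    ring
  · rw [if_neg h, if_neg (fun hh => h (hcond.mp hh))]
    simp

end
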